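/- arXiv:1611.10342 — 5 statements merged into one kernel-verified Lean document; each statement's English description precedes it below -/
import Mathlib

section
/- Every morphism h: τ → ρ in the Borisov–Manin category of graphs factors as h = c ∘ g where g: τ → σ is a grafting and c: σ → ρ is a compression, and this factorisation is unique up to unique isomorphism of the middle object. Equivalently, graftings and compressions form an orthogonal factorisation system on the Borisov–Manin category. -/
/-- A Borisov–Manin graph: a quadruple `(V, F, ∂, j)` of finite sets with
`∂ : F → V` and `j : F → F` an involution.  Fixpoints of `j` are *tails*;
2-element orbits of `j` are *edges*. -/
structure BMGraph where
  V : Type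
  F : Type
  fintV : Fintype V
  fintF : Fintype F
  decF : DecidableEq F
  bd : F → V
  j : F → F
  j_invol : ∀ f, j (j f) = f

attribute [instance] BMGraph.fintV BMGraph.fintF BMGraph.decF

/-- A Borisov–Manin morphism `τ → σ`: a triple `(h^F, h_V, j_h)` satisfying the
Borisov–Manin axioms.  The involution `j_h` is recorded as a total map on `F_τ`,
normalised to be the identity on the image of the flag map, and a fixpoint-free
involution on the complement, agreeing with `j_τ` on edges. -/
structure BMHom (τ σ : BMGraph) where
  flagMap : σ.F → τ.F
  vertexMap : τ.V → σ.V
  jh : τ.F → τ.F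
  flag_inj : Function.Injective flagMap
  vertex_surj : Function.Surjective vertexMap
  range_j_closed : ∀ f : σ.F, τ.j (flagMap f) ∈ Set.range flagMap
  compl_j_closed : ∀ g : τ.F, g ∉ Set.range flagMap → τ.j g ∉ Set.range flagMap
  jh_range : ∀ g ∈ Set.range flagMap, jh g = g
  jh_compl : ∀ g, g ∉ Set.range flagMap → jh g ∉ Set.range flagMap
  jh_invol : ∀ g, jh (jh g) = g
  jh_nofix : ∀ g, g ∉ Set.range flagMap → jh g ≠ g
  jh_edge : ∀ g, g ∉ Set.range flagMap → τ.j g ≠ g → jh g = τ.j g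
  bd_comm : ∀ f : σ.F, vertexMap (τ.bd (flagMap f)) = σ.bd f
  contract_bd : ∀ g, g ∉ Set.range flagMap → vertexMap (τ.bd (jh g)) = vertexMap (τ.bd g)
  edges_to_edges : ∀ f f' : σ.F, τ.j (flagMap f) = flagMap f' → flagMap f ≠ flagMap f' → σ.j f = f'

/-- A grafting: both the vertex map and the flag map are bijective. -/
def IsGrafting {τ σ : BMGraph} (h : BMHom τ σ) : Prop :=
  Function.Bijective h.flagMap ∧ Function.Bijective h.vertexMap

/-- A compression: the flag map restricts to a bijection from the tails of the
codomain graph onto the tails of the domain graph. -/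
def IsCompression {τ σ : BMGraph} (h : BMHom τ σ) : Prop :=
  (∀ f : σ.F, σ.j f = f → τ.j (h.flagMap f) = h.flagMap f) ∧
  (∀ g : τ.F, τ.j g = g → ∃ f : σ.F, σ.j f = f ∧ h.flagMap f = g)

/-- `IsCompositeOf k g c` expresses that `k : τ → ρ` is the Borisov–Manin
composite of `g : τ → σ` followed by `c : σ → ρ`: the flag map is `g^F ∘ c^F`,
the vertex map is `c_V ∘ g_V`, and the involution of `k` is `j_g` on the
complement of `g^F` and `j_c` (transported along `g^F`) on the complement of
`c^F`. -/
def IsCompositeOf {τ σ ρ : BMGraph} (k : BMHom τ ρ) (g : BMHom τ σ) (c : BMHom σ ρ) : Prop :=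
  (∀ f, k.flagMap f = g.flagMap (c.flagMap f)) ∧
  (∀ v, k.vertexMap v = c.vertexMap (g.vertexMap v)) ∧
  (∀ x, x ∉ Set.range g.flagMap → k.jh x = g.jh x) ∧
  (∀ f, f ∉ Set.range c.flagMap → k.jh (g.flagMap f) = g.flagMap (c.jh f))

/-- An isomorphism of BM graphs realised as a morphism: a structure-preserving
bijection. -/
def IsIso {σ σ' : BMGraph} (m : BMHom σ σ') : Prop :=
  Function.Bijective m.flagMap ∧ Function.Bijective m.vertexMap ∧
  (∀ f, σ.j (m.flagMap f) = m.flagMap (σ'.j f))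

/-! The middle object of the factorisation of `h : τ → ρ` is `τ` itself with a new involution:
`j_ρ` transported along `h^F` on the image of `h^F`, and `j_h` off it. It still agrees with `j_τ`
on the edges of `τ`, so the identity maps form a grafting, and the data of `h` form a compression
out of it, whose tails are exactly the images of the tails of `ρ`.

Conversely, in any factorisation `h = c ∘ g` the injection `g^F` carries the involution of the
middle graph to this one, because a compression has no tails off its image and so its involution
`j_c` there is that of its domain. Two factorisations are therefore compared by the bijection
`(g^F)⁻¹ ∘ g'^F`, and the comparison is unique because a morphism `m` with `h = m ∘ g` is
determined by `h` once `g_V` is surjective. -/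

namespace BMHom

theorem ext {τ σ : BMGraph} {a b : BMHom τ σ} (hF : a.flagMap = b.flagMap)
    (hV : a.vertexMap = b.vertexMap) (hj : a.jh = b.jh) : a = b := by
  cases a; cases b; simp_all

def ofEquiv {σ σ' : BMGraph} (eF : σ'.F ≃ σ.F) (eV : σ.V ≃ σ'.V)
    (hj : ∀ f, σ.j (eF f) = eF (σ'.j f)) (hbd : ∀ f, eV (σ.bd (eF f)) = σ'.bd f) :
    BMHom σ σ' where
  flagMap := eF
  vertexMap := eV
  jh := id
  flag_inj := eF.injective
  vertex_surj := eV.surjective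
  range_j_closed f := ⟨σ'.j f, (hj f).symm⟩
  compl_j_closed x hx := absurd (eF.surjective x) hx
  jh_range _ _ := rfl
  jh_compl x hx := absurd (eF.surjective x) hx
  jh_invol _ := rfl
  jh_nofix x hx := absurd (eF.surjective x) hx
  jh_edge x hx := absurd (eF.surjective x) hx
  bd_comm := hbd
  contract_bd x hx := absurd (eF.surjective x) hx
  edges_to_edges f f' hf _ := eF.injective (by rw [← hj, hf])

theorem ofEquiv_isIso {σ σ' : BMGraph} (eF : σ'.F ≃ σ.F) (eV : σ.V ≃ σ'.V)
    (hj : ∀ f, σ.j (eF f) = eF (σ'.j f)) (hbd : ∀ f, eV (σ.bd (eF f)) = σ'.bd f) :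
    IsIso (ofEquiv eF eV hj hbd) :=
  ⟨eF.bijective, eV.bijective, hj⟩

variable {τ ρ : BMGraph} (h : BMHom τ ρ)

noncomputable def midJ : τ.F → τ.F :=
  Function.extend h.flagMap (h.flagMap ∘ ρ.j) h.jh

theorem midJ_flagMap (a : ρ.F) : h.midJ (h.flagMap a) = h.flagMap (ρ.j a) :=
  h.flag_inj.extend_apply _ _ a

theorem midJ_of_notMem_range {x : τ.F} (hx : x ∉ Set.range h.flagMap) : h.midJ x = h.jh x :=
  Function.extend_apply' _ _ x hx

theorem midJ_midJ (x : τ.F) : h.midJ (h.midJ x) = x := by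
  by_cases hx : x ∈ Set.range h.flagMap
  · obtain ⟨a, rfl⟩ := hx
    rw [midJ_flagMap, midJ_flagMap, ρ.j_invol]
  · rw [h.midJ_of_notMem_range hx, h.midJ_of_notMem_range (h.jh_compl x hx), h.jh_invol]

theorem midJ_eq_j {x : τ.F} (hx : τ.j x ≠ x) : h.midJ x = τ.j x := by
  by_cases hr : x ∈ Set.range h.flagMap
  · obtain ⟨a, rfl⟩ := hr
    obtain ⟨b, hb⟩ := h.range_j_closed a
    rw [midJ_flagMap, h.edges_to_edges a b hb.symm (fun hab => hx (hab.trans hb).symm), hb]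
  · rw [h.midJ_of_notMem_range hr, h.jh_edge x hr hx]

noncomputable def midGraph : BMGraph where
  V := τ.V
  F := τ.F
  fintV := τ.fintV
  fintF := τ.fintF
  decF := τ.decF
  bd := τ.bd
  j := h.midJ
  j_invol := h.midJ_midJ

noncomputable def graftingPart : BMHom τ h.midGraph where
  flagMap := id
  vertexMap := id
  jh := id
  flag_inj := Function.injective_id
  vertex_surj := Function.surjective_id
  range_j_closed f := ⟨τ.j f, rfl⟩
  compl_j_closed x hx := absurd ⟨x, rfl⟩ hx
  jh_range _ _ := rfl
  jh_compl x hx := absurd ⟨x, rfl⟩ hx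
  jh_invol _ := rfl
  jh_nofix x hx := absurd ⟨x, rfl⟩ hx
  jh_edge x hx := absurd ⟨x, rfl⟩ hx
  bd_comm _ := rfl
  contract_bd x hx := absurd ⟨x, rfl⟩ hx
  edges_to_edges f _ hf hne :=
    (h.midJ_eq_j (x := f) fun hjf => hne (hjf.symm.trans hf)).trans hf

noncomputable def compressionPart : BMHom h.midGraph ρ where
  flagMap := h.flagMap
  vertexMap := h.vertexMap
  jh := h.jh
  flag_inj := h.flag_inj
  vertex_surj := h.vertex_surj
  range_j_closed f := ⟨ρ.j f, (h.midJ_flagMap f).symm⟩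
  compl_j_closed x hx := by
    show h.midJ x ∉ _
    rw [h.midJ_of_notMem_range hx]
    exact h.jh_compl x hx
  jh_range := h.jh_range
  jh_compl := h.jh_compl
  jh_invol := h.jh_invol
  jh_nofix := h.jh_nofix
  jh_edge x hx _ := (h.midJ_of_notMem_range hx).symm
  bd_comm := h.bd_comm
  contract_bd := h.contract_bd
  edges_to_edges f f' hf _ := h.flag_inj ((h.midJ_flagMap f).symm.trans hf)

theorem graftingPart_isGrafting : IsGrafting h.graftingPart :=
  ⟨Function.bijective_id, Function.bijective_id⟩

theorem compressionPart_isCompression : IsCompression h.compressionPart := by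
  refine ⟨fun f hf => (h.midJ_flagMap f).trans (congrArg h.flagMap hf), fun x hx => ?_⟩
  by_cases hr : x ∈ Set.range h.flagMap
  · obtain ⟨a, rfl⟩ := hr
    exact ⟨a, h.flag_inj ((h.midJ_flagMap a).symm.trans hx), rfl⟩
  · exact absurd ((h.midJ_of_notMem_range hr).symm.trans hx) (h.jh_nofix x hr)

end BMHom

section Composite

variable {τ σ ρ : BMGraph} {k : BMHom τ ρ} {g : BMHom τ σ} {c : BMHom σ ρ}

theorem IsCompositeOf.of_surjective (hg : Function.Surjective g.flagMap)
    (hF : ∀ f, k.flagMap f = g.flagMap (c.flagMap f))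
    (hV : ∀ v, k.vertexMap v = c.vertexMap (g.vertexMap v))
    (hjh : ∀ f, f ∉ Set.range c.flagMap → k.jh (g.flagMap f) = g.flagMap (c.jh f)) :
    IsCompositeOf k g c :=
  ⟨hF, hV, fun x hx => absurd (hg x) hx, hjh⟩

theorem IsCompositeOf.right_unique {c' : BMHom σ ρ} (hg : Function.Surjective g.vertexMap)
    (hc : IsCompositeOf k g c) (hc' : IsCompositeOf k g c') : c = c' := by
  have hF : c.flagMap = c'.flagMap := funext fun f =>
    g.flag_inj (by rw [← hc.1, ← hc'.1])
  refine BMHom.ext hF ?_ (funext fun x => ?_)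
  · funext v
    obtain ⟨w, rfl⟩ := hg v
    rw [← hc.2.1, ← hc'.2.1]
  · by_cases hx : x ∈ Set.range c.flagMap
    · rw [c.jh_range x hx, c'.jh_range x (hF ▸ hx)]
    · exact g.flag_inj (by rw [← hc.2.2.2 x hx, ← hc'.2.2.2 x (hF ▸ hx)])

end Composite

section Compression

variable {σ ρ : BMGraph} {c : BMHom σ ρ}

theorem IsCompression.j_ne_self (hc : IsCompression c) {x : σ.F}
    (hx : x ∉ Set.range c.flagMap) : σ.j x ≠ x := fun hjx =>
  let ⟨f, _, hf⟩ := hc.2 x hjx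
  hx ⟨f, hf⟩

theorem IsCompression.jh_eq_j (hc : IsCompression c) {x : σ.F}
    (hx : x ∉ Set.range c.flagMap) : c.jh x = σ.j x :=
  c.jh_edge x hx (hc.j_ne_self hx)

theorem IsCompression.j_flagMap (hc : IsCompression c) (a : ρ.F) :
    σ.j (c.flagMap a) = c.flagMap (ρ.j a) := by
  by_cases htail : σ.j (c.flagMap a) = c.flagMap a
  · obtain ⟨f, hjf, hf⟩ := hc.2 _ htail
    obtain rfl := c.flag_inj hf
    rw [htail, hjf]
  · obtain ⟨b, hb⟩ := c.range_j_closed a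
    rw [← hb, c.edges_to_edges a b hb.symm (fun hab => htail (hab.trans hb).symm)]

end Compression

theorem IsCompositeOf.flagMap_j {τ σ ρ : BMGraph} {h : BMHom τ ρ} {g : BMHom τ σ}
    {c : BMHom σ ρ} (hc : IsCompression c) (hgc : IsCompositeOf h g c) (x : σ.F) :
    g.flagMap (σ.j x) = h.midJ (g.flagMap x) := by
  by_cases hx : x ∈ Set.range c.flagMap
  · obtain ⟨a, rfl⟩ := hx
    rw [hc.j_flagMap, ← hgc.1, ← hgc.1, h.midJ_flagMap]
  · have hgx : g.flagMap x ∉ Set.range h.flagMap := by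
      rintro ⟨a, ha⟩
      exact hx ⟨a, g.flag_inj (by rw [← hgc.1, ha])⟩
    rw [h.midJ_of_notMem_range hgx, hgc.2.2.2 x hx, hc.jh_eq_j hx]

theorem grafting_compression_factorisation_unique {τ σ σ' ρ : BMGraph} {h : BMHom τ ρ}
    {g : BMHom τ σ} {c : BMHom σ ρ} {g' : BMHom τ σ'} {c' : BMHom σ' ρ}
    (hg : IsGrafting g) (hc : IsCompression c) (hgc : IsCompositeOf h g c)
    (hg' : IsGrafting g') (hc' : IsCompression c') (hgc' : IsCompositeOf h g' c') :
    ∃! m : BMHom σ σ', IsIso m ∧ IsCompositeOf g' g m ∧ IsCompositeOf c m c' := by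
  let eF : σ'.F ≃ σ.F := (Equiv.ofBijective _ hg'.1).trans (Equiv.ofBijective _ hg.1).symm
  let eV : σ.V ≃ σ'.V := (Equiv.ofBijective _ hg.2).symm.trans (Equiv.ofBijective _ hg'.2)
  have hgF : ∀ f, g.flagMap (eF f) = g'.flagMap f := fun f =>
    (Equiv.ofBijective _ hg.1).apply_symm_apply _
  have hgV : ∀ v, eV (g.vertexMap v) = g'.vertexMap v := fun v =>
    congrArg g'.vertexMap ((Equiv.ofBijective _ hg.2).symm_apply_apply v)
  have hj : ∀ f, σ.j (eF f) = eF (σ'.j f) := fun f => g.flag_inj <| by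
    rw [hgc.flagMap_j hc, hgF, hgF, hgc'.flagMap_j hc']
  have hbd : ∀ f, eV (σ.bd (eF f)) = σ'.bd f := fun f => by
    rw [← g.bd_comm, hgV, hgF, g'.bd_comm]
  have hcF : ∀ a, c.flagMap a = eF (c'.flagMap a) := fun a => g.flag_inj <| by
    rw [hgF, ← hgc'.1, hgc.1]
  let m := BMHom.ofEquiv eF eV hj hbd
  have hgm : IsCompositeOf g' g m :=
    .of_surjective hg.1.2 (fun f => (hgF f).symm) (fun v => (hgV v).symm)
      (fun f hf => absurd (eF.surjective f) hf)
  have hmc : IsCompositeOf c m c' := by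
    refine .of_surjective eF.surjective hcF (fun v => ?_) (fun f hf => ?_)
    · obtain ⟨w, rfl⟩ := hg.2.2 v
      rw [← hgc.2.1, hgc'.2.1, ← hgV]
      rfl
    · have hmf : eF f ∉ Set.range c.flagMap := fun ⟨a, ha⟩ =>
        hf ⟨a, eF.injective (by rw [← hcF, ha])⟩
      show c.jh (eF f) = eF (c'.jh f)
      rw [hc.jh_eq_j hmf, hc'.jh_eq_j hf, hj]
  exact ⟨m, ⟨BMHom.ofEquiv_isIso eF eV hj hbd, hgm, hmc⟩,
    fun m' ⟨_, hgm', _⟩ => hgm'.right_unique hg.2.2 hgm⟩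

/-- Every Borisov–Manin morphism `h : τ → ρ` factors as a
grafting `g : τ → σ` followed by a compression `c : σ → ρ`, and the
factorisation is unique up to a unique isomorphism of the middle object:
graftings and compressions form an orthogonal factorisation system. -/
theorem grafting_compression_factorisation {τ ρ : BMGraph} (h : BMHom τ ρ) :
    (∃ (σ : BMGraph) (g : BMHom τ σ) (c : BMHom σ ρ),
      IsGrafting g ∧ IsCompression c ∧ IsCompositeOf h g c) ∧
    (∀ (σ σ' : BMGraph) (g : BMHom τ σ) (c : BMHom σ ρ)
       (g' : BMHom τ σ') (c' : BMHom σ' ρ),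
      IsGrafting g → IsCompression c → IsCompositeOf h g c →
      IsGrafting g' → IsCompression c' → IsCompositeOf h g' c' →
      ∃! m : BMHom σ σ',
        IsIso m ∧ IsCompositeOf g' g m ∧ IsCompositeOf c m c') :=
  ⟨⟨h.midGraph, h.graftingPart, h.compressionPart, h.graftingPart_isGrafting,
      h.compressionPart_isCompression,
      .of_surjective Function.surjective_id (fun _ => rfl) (fun _ => rfl) (fun _ _ => rfl)⟩,
    fun _ _ _ _ _ _ => grafting_compression_factorisation_unique⟩
end

section
/- In the Borisov–Manin category, the composite of two graftings is a grafting, and the composite of two compressions is a compression; moreover every isomorphism is both a grafting and a compression. Hence graftings and compressions each form a wide subcategory. -/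
/-- The identity morphism of a BM graph. -/
def BMHom.id (τ : BMGraph) : BMHom τ τ where
  flagMap := fun f => f
  vertexMap := fun v => v
  jh := fun f => f
  flag_inj := fun _ _ h => h
  vertex_surj := fun v => ⟨v, rfl⟩
  range_j_closed := fun f => ⟨τ.j f, rfl⟩
  compl_j_closed := fun g hg => absurd ⟨g, rfl⟩ hg
  jh_range := fun _ _ => rfl
  jh_compl := fun g hg => absurd ⟨g, rfl⟩ hg
  jh_invol := fun _ => rfl
  jh_nofix := fun g hg => absurd ⟨g, rfl⟩ hg
  jh_edge := fun g hg => absurd ⟨g, rfl⟩ hg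
  bd_comm := fun _ => rfl
  contract_bd := fun g hg => absurd ⟨g, rfl⟩ hg
  edges_to_edges := fun _ _ hj _ => hj

namespace IsCompositeOf

variable {τ σ ρ : BMGraph} {k : BMHom τ ρ} {g : BMHom τ σ} {c : BMHom σ ρ}

theorem flagMap_eq (h : IsCompositeOf k g c) : k.flagMap = g.flagMap ∘ c.flagMap :=
  funext h.1

theorem vertexMap_eq (h : IsCompositeOf k g c) : k.vertexMap = c.vertexMap ∘ g.vertexMap :=
  funext h.2.1

theorem isGrafting (h : IsCompositeOf k g c) (hg : IsGrafting g) (hc : IsGrafting c) :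
    IsGrafting k := by
  rw [IsGrafting, h.flagMap_eq, h.vertexMap_eq]
  exact ⟨hg.1.comp hc.1, hc.2.comp hg.2⟩

theorem isCompression (h : IsCompositeOf k g c) (hg : IsCompression g) (hc : IsCompression c) :
    IsCompression k := by
  refine ⟨fun f hf => ?_, fun x hx => ?_⟩
  · rw [h.1]
    exact hg.1 _ (hc.1 f hf)
  · obtain ⟨f, hf, rfl⟩ := hg.2 x hx
    obtain ⟨f', hf', rfl⟩ := hc.2 f hf
    exact ⟨f', hf', h.1 f'⟩

end IsCompositeOf

namespace IsIso

variable {σ σ' : BMGraph} {m : BMHom σ σ'}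

theorem isGrafting (hm : IsIso m) : IsGrafting m :=
  ⟨hm.1, hm.2.1⟩

theorem isCompression (hm : IsIso m) : IsCompression m := by
  obtain ⟨hF, -, hj⟩ := hm
  refine ⟨fun f hf => by rw [hj, hf], fun x hx => ?_⟩
  obtain ⟨f, rfl⟩ := hF.2 x
  exact ⟨f, hF.1 (by rw [← hj, hx]), rfl⟩

end IsIso

theorem isIso_id (τ : BMGraph) : IsIso (BMHom.id τ) :=
  ⟨Function.bijective_id, Function.bijective_id, fun _ => rfl⟩

/-- Graftings and compressions are each closed under
composition, and every isomorphism is both a grafting and a compression.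
Hence graftings and compressions each form a wide subcategory of the
Borisov–Manin category. -/
theorem graftings_compressions_wide_subcategories :
    (∀ (τ : BMGraph), IsGrafting (BMHom.id τ) ∧ IsCompression (BMHom.id τ)) ∧
    (∀ (τ σ ρ : BMGraph) (g : BMHom τ σ) (c : BMHom σ ρ) (k : BMHom τ ρ),
      IsCompositeOf k g c → IsGrafting g → IsGrafting c → IsGrafting k) ∧
    (∀ (τ σ ρ : BMGraph) (g : BMHom τ σ) (c : BMHom σ ρ) (k : BMHom τ ρ),
      IsCompositeOf k g c → IsCompression g → IsCompression c → IsCompression k) ∧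
    (∀ (τ σ : BMGraph) (m : BMHom τ σ), IsIso m → IsGrafting m ∧ IsCompression m) :=
  ⟨fun τ => ⟨(isIso_id τ).isGrafting, (isIso_id τ).isCompression⟩,
    fun _ _ _ _ _ _ h => h.isGrafting,
    fun _ _ _ _ _ _ h => h.isCompression,
    fun _ _ _ hm => ⟨hm.isGrafting, hm.isCompression⟩⟩
end

section
/- Let X be a Joyal–Kock graph, and let f, g : I → X be two etale morphisms from the unit graph I mapping to two distinct edges of X, with f hitting a port of X in its s-complement and g hitting another port. Then the coequaliser of f and g exists in the category of graphs and etale morphisms, is computed levelwise, and the quotient map X → Y is etale and bijective on vertices. -/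
/-- A Joyal–Kock graph: a diagram of finite sets `A ←s– H –p→ V` with `s`
injective and a fixpoint-free involution `i` on the set of arcs `A`. -/
structure JKGraph where
  A : Type
  H : Type
  V : Type
  fintA : Fintype A
  fintH : Fintype H
  fintV : Fintype V
  decA : DecidableEq A
  decH : DecidableEq H
  s : H → A
  p : H → V
  i : A → A
  s_inj : Function.Injective s
  i_invol : ∀ a, i (i a) = a
  i_nofix : ∀ a, i a ≠ a

attribute [instance] JKGraph.fintA JKGraph.fintH JKGraph.fintV JKGraph.decA JKGraph.decH

/-- An etale morphism of JK graphs: a levelwise map commuting with `s`, `p`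
and the involutions, such that the square on `H` and `V` is a pullback (each
vertex maps to a vertex of the same valence). -/
structure Etale (G G' : JKGraph) where
  fA : G.A → G'.A
  fH : G.H → G'.H
  fV : G.V → G'.V
  comm_s : ∀ h, fA (G.s h) = G'.s (fH h)
  comm_p : ∀ h, fV (G.p h) = G'.p (fH h)
  comm_i : ∀ a, fA (G.i a) = G'.i (fA a)
  pullback : ∀ (h' : G'.H) (v : G.V), G'.p h' = fV v → ∃! h : G.H, G.p h = v ∧ fH h = h'

/-- `IsEComp e1 e2 e` expresses that `e` is the (levelwise) composite of the
etale morphisms `e1` followed by `e2`. -/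
def IsEComp {G G' G'' : JKGraph} (e1 : Etale G G') (e2 : Etale G' G'') (e : Etale G G'') : Prop :=
  (∀ a, e.fA a = e2.fA (e1.fA a)) ∧ (∀ h, e.fH h = e2.fH (e1.fH h)) ∧
  (∀ v, e.fV v = e2.fV (e1.fV v))

/-- The ports of a graph: the arcs not in the image of `s`. -/
def JKGraph.ports (G : JKGraph) : Set G.A := {a | a ∉ Set.range G.s}

/-- An edge (i-orbit) is isolated if neither of its arcs lies in the image of
`s`; `NoIsolated` says the graph has no isolated edges. -/
def NoIsolated (G : JKGraph) : Prop :=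
  ∀ a : G.A, a ∈ Set.range G.s ∨ G.i a ∈ Set.range G.s

/-- A reduced cover: an etale morphism which is surjective on arcs (hence on
edges) and bijective on vertices. -/
def IsReducedCover {R X : JKGraph} (e : Etale R X) : Prop :=
  Function.Bijective e.fV ∧ Function.Surjective e.fA

/-- The unit graph `I`: one edge (two arcs exchanged by the involution) and no
vertices. -/
def unitGraph : JKGraph where
  A := Bool
  H := Empty
  V := Empty
  fintA := inferInstance
  fintH := inferInstance
  fintV := inferInstance
  decA := inferInstance
  decH := inferInstance
  s := Empty.elim
  p := Empty.elim
  i := not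
  s_inj := fun x => x.elim
  i_invol := by decide
  i_nofix := by decide

/-!
Write `a = f true` and `b = g true`, so the ports are `a` and `i b`. The coequaliser `Y` keeps the
half-edges and vertices of `X`, and as arcs those of `X` off the edge `{b, i b}`; the quotient on
arcs is the retraction `b ↦ a`, `i b ↦ i a`, which is the set coequaliser. Since `a` and `i b` are
not in the image of `s`, the retraction is injective on that image, so `Y` is again a graph; the
quotient is the identity on half-edges and vertices, hence trivially étale, and any étale map
identifying the two edges factors through it uniquely because the quotient is onto on arcs.
-/

theorem Etale.ext {G G' : JKGraph} {e e' : Etale G G'} (hA : e.fA = e'.fA)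
    (hH : e.fH = e'.fH) (hV : e.fV = e'.fV) : e = e' := by
  cases e; cases e'; cases hA; cases hH; cases hV; rfl

/-- Étale because pullback squares paste. -/
def Etale.comp {G G' G'' : JKGraph} (e₁ : Etale G G') (e₂ : Etale G' G'') : Etale G G'' where
  fA := e₂.fA ∘ e₁.fA
  fH := e₂.fH ∘ e₁.fH
  fV := e₂.fV ∘ e₁.fV
  comm_s h := by simp only [Function.comp_apply, e₁.comm_s, e₂.comm_s]
  comm_p h := by simp only [Function.comp_apply, e₁.comm_p, e₂.comm_p]
  comm_i a := by simp only [Function.comp_apply, e₁.comm_i, e₂.comm_i]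
  pullback h'' v hv := by
    obtain ⟨h', ⟨hp', hs'⟩, huniq'⟩ := e₂.pullback h'' (e₁.fV v) hv
    obtain ⟨h, ⟨hp, hs⟩, huniq⟩ := e₁.pullback h' v hp'
    refine ⟨h, ⟨hp, by simp only [Function.comp_apply, hs, hs']⟩, fun k ⟨hkp, hks⟩ => ?_⟩
    exact huniq k ⟨hkp, huniq' _ ⟨by rw [← e₁.comm_p, hkp], hks⟩⟩

theorem Etale.isEComp_comp {G G' G'' : JKGraph} (e₁ : Etale G G') (e₂ : Etale G' G'') :
    IsEComp e₁ e₂ (e₁.comp e₂) :=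
  ⟨fun _ => rfl, fun _ => rfl, fun _ => rfl⟩

theorem isEComp_of_unitGraph {G G' : JKGraph} {e₁ : Etale unitGraph G} {e₂ : Etale G G'}
    {e : Etale unitGraph G'} (h : ∀ x, e.fA x = e₂.fA (e₁.fA x)) : IsEComp e₁ e₂ e :=
  ⟨h, fun h => h.elim, fun v => v.elim⟩

namespace JKGraph

variable (X : JKGraph)

theorem i_involutive : Function.Involutive X.i := X.i_invol

theorem i_inj {x y : X.A} : X.i x = X.i y ↔ x = y := X.i_involutive.injective.eq_iff

theorem i_eq_comm {a b : X.A} : X.i a = b ↔ a = X.i b :=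
  X.i_involutive.eq_iff

/-- The arc map of the coequaliser identifying the edge `{b, i b}` with `{a, i a}`. -/
def edgeRetract (a b x : X.A) : X.A :=
  if x = b then a else if x = X.i b then X.i a else x

variable {X} {a b : X.A}

theorem edgeRetract_of_ne {x : X.A} (hb : x ≠ b) (hib : x ≠ X.i b) : X.edgeRetract a b x = x := by
  rw [edgeRetract, if_neg hb, if_neg hib]

theorem edgeRetract_i (x : X.A) : X.edgeRetract a b (X.i x) = X.i (X.edgeRetract a b x) := by
  unfold edgeRetract
  split_ifs <;> grind [X.i_invol, X.i_nofix, X.i_inj]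

theorem edgeRetract_ne (hab : a ≠ b) (habi : a ≠ X.i b) (x : X.A) :
    X.edgeRetract a b x ≠ b ∧ X.edgeRetract a b x ≠ X.i b := by
  have : X.i a ≠ b ∧ X.i a ≠ X.i b := ⟨fun h => habi (X.i_eq_comm.1 h), fun h => hab (X.i_inj.1 h)⟩
  unfold edgeRetract; split_ifs with hb hib
  exacts [⟨hab, habi⟩, this, ⟨hb, hib⟩]

theorem edgeRetract_eq_edgeRetract_iff (habi : a ≠ X.i b) (x y : X.A) :
    X.edgeRetract a b x = X.edgeRetract a b y ↔
      (x = y ∨ (x = a ∧ y = b) ∨ (x = b ∧ y = a) ∨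
       (x = X.i a ∧ y = X.i b) ∨ (x = X.i b ∧ y = X.i a)) := by
  unfold edgeRetract
  split_ifs <;> grind [X.i_invol, X.i_nofix, X.i_inj]

theorem edgeRetract_injOn (habi : a ≠ X.i b) :
    Set.InjOn (X.edgeRetract a b) {x | x ≠ a ∧ x ≠ X.i b} := by
  rintro x ⟨hxa, hxb⟩ y ⟨hya, hyb⟩ hxy
  rw [edgeRetract_eq_edgeRetract_iff habi] at hxy
  grind

theorem _root_.Etale.fA_edgeRetract {K : JKGraph} (e : Etale X K) (he : e.fA a = e.fA b)
    (x : X.A) : e.fA (X.edgeRetract a b x) = e.fA x := by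
  unfold edgeRetract
  split_ifs with hb hib
  · rw [hb, he]
  · rw [hib, e.comm_i, e.comm_i, he]
  · rfl

variable (ha : a ∉ Set.range X.s) (hib : X.i b ∉ Set.range X.s) (hab : a ≠ b) (habi : a ≠ X.i b)

/-- Gluing the ports `a` and `i b` into one inner edge; each glued arc is represented by its
member among `a`, `i a`. -/
def glue : JKGraph where
  A := {x : X.A // x ≠ b ∧ x ≠ X.i b}
  H := X.H
  V := X.V
  fintA := Subtype.fintype _
  fintH := inferInstance
  fintV := inferInstance
  decA := Subtype.instDecidableEq
  decH := inferInstance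
  s h := ⟨X.edgeRetract a b (X.s h), edgeRetract_ne hab habi _⟩
  p := X.p
  i x := ⟨X.i x.1, fun h => x.2.2 (X.i_eq_comm.1 h), fun h => x.2.1 (X.i_inj.1 h)⟩
  s_inj h h' hs := X.s_inj <| edgeRetract_injOn habi
    ⟨fun hh => ha ⟨h, hh⟩, fun hh => hib ⟨h, hh⟩⟩ ⟨fun hh => ha ⟨h', hh⟩, fun hh => hib ⟨h', hh⟩⟩
    (congrArg Subtype.val hs)
  i_invol x := Subtype.ext (X.i_invol x.1)
  i_nofix x h := X.i_nofix x.1 (congrArg Subtype.val h)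

def toGlue : Etale X (X.glue ha hib hab habi) where
  fA x := ⟨X.edgeRetract a b x, edgeRetract_ne hab habi x⟩
  fH := id
  fV := id
  comm_s _ := rfl
  comm_p _ := rfl
  comm_i x := Subtype.ext (edgeRetract_i x)
  pullback h' _ hv := ⟨h', ⟨hv, rfl⟩, fun _ hk => hk.2⟩

theorem toGlue_fA_surjective : Function.Surjective (X.toGlue ha hib hab habi).fA :=
  fun x => ⟨x.1, Subtype.ext (edgeRetract_of_ne x.2.1 x.2.2)⟩

theorem toGlue_fA_eq_iff (x y : X.A) :
    (X.toGlue ha hib hab habi).fA x = (X.toGlue ha hib hab habi).fA y ↔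
      (x = y ∨ (x = a ∧ y = b) ∨ (x = b ∧ y = a) ∨
       (x = X.i a ∧ y = X.i b) ∨ (x = X.i b ∧ y = X.i a)) :=
  Subtype.ext_iff.trans (edgeRetract_eq_edgeRetract_iff habi x y)

theorem toGlue_fA_left_eq_right :
    (X.toGlue ha hib hab habi).fA a = (X.toGlue ha hib hab habi).fA b :=
  (toGlue_fA_eq_iff ha hib hab habi a b).2 (Or.inr (Or.inl ⟨rfl, rfl⟩))

theorem existsUnique_isEComp_toGlue {K : JKGraph} (e : Etale X K) (he : e.fA a = e.fA b) :
    ∃! e' : Etale (X.glue ha hib hab habi) K, IsEComp (X.toGlue ha hib hab habi) e' e := by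
  refine ⟨⟨fun x => e.fA x.1, e.fH, e.fV, fun h => ?_, e.comm_p, fun x => e.comm_i x.1,
    e.pullback⟩, ⟨fun x => (e.fA_edgeRetract he x).symm, fun _ => rfl, fun _ => rfl⟩, ?_⟩
  · exact (e.fA_edgeRetract he _).trans (e.comm_s h)
  · rintro e' ⟨hA, hH, hV⟩
    refine Etale.ext (funext fun x => ?_) (funext fun h => (hH h).symm)
      (funext fun v => (hV v).symm)
    obtain ⟨y, rfl⟩ := toGlue_fA_surjective ha hib hab habi x
    exact (hA y).symm.trans (e.fA_edgeRetract he y).symm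

end JKGraph

/-- Let `f, g : I → X` be etale morphisms from the unit
graph mapping to two distinct edges of `X`, with `f` sending one arc to a port
and `g` sending the other arc to a port.  Then the coequaliser of `f` and `g`
exists in the category of graphs and etale morphisms and is computed
levelwise (bijective on half-edges and vertices, and on arcs the set
coequaliser, gluing the two ports into an inner edge); the quotient map
`X → Y` is etale and bijective on vertices. -/
theorem jk_coequaliser_glues_ports (X : JKGraph) (f g : Etale unitGraph X)
    (hf : f.fA true ∉ Set.range X.s) (hg : g.fA false ∉ Set.range X.s)
    (hdist : f.fA true ≠ g.fA true ∧ f.fA true ≠ g.fA false) :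
    ∃ (Y : JKGraph) (q : Etale X Y),
      Function.Bijective q.fH ∧ Function.Bijective q.fV ∧
      Function.Surjective q.fA ∧
      (∀ a a' : X.A, q.fA a = q.fA a' ↔
        (a = a' ∨ (a = f.fA true ∧ a' = g.fA true) ∨ (a = g.fA true ∧ a' = f.fA true) ∨
         (a = f.fA false ∧ a' = g.fA false) ∨ (a = g.fA false ∧ a' = f.fA false))) ∧
      (∃ c0 : Etale unitGraph Y, IsEComp f q c0 ∧ IsEComp g q c0) ∧
      (∀ (K : JKGraph) (e : Etale X K),
        (∃ e0 : Etale unitGraph K, IsEComp f e e0 ∧ IsEComp g e e0) →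
        ∃! e' : Etale Y K, IsEComp q e' e) := by
  have hfi : f.fA false = X.i (f.fA true) := f.comm_i true
  have hgi : g.fA false = X.i (g.fA true) := g.comm_i true
  rw [hgi] at hg hdist
  set q := X.toGlue hf hg hdist.1 hdist.2
  have hfg : ∀ x, q.fA (f.fA x) = q.fA (g.fA x)
    | true => JKGraph.toGlue_fA_left_eq_right hf hg hdist.1 hdist.2
    | false => by rw [hfi, hgi, q.comm_i, q.comm_i, JKGraph.toGlue_fA_left_eq_right]
  refine ⟨_, q, Function.bijective_id, Function.bijective_id,
    JKGraph.toGlue_fA_surjective hf hg hdist.1 hdist.2, ?_,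
    ⟨f.comp q, f.isEComp_comp q, isEComp_of_unitGraph hfg⟩, ?_⟩
  · intro x y
    rw [JKGraph.toGlue_fA_eq_iff, hfi, hgi]
  · rintro K e ⟨e0, hfe, hge⟩
    exact JKGraph.existsUnique_isEComp_toGlue hf hg hdist.1 hdist.2 e
      ((hfe.1 true).symm.trans (hge.1 true))
end

section
/- For a Joyal–Kock graph X without isolated edges, the reduced covers of X (up to isomorphism over X) are in order-preserving bijection with the subsets of the set of inner edges of X; in particular they form a Boolean lattice. -/
/-- The arcs belonging to inner edges: both the arc and its reverse are in the
image of `s`. -/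
def innerArcs (X : JKGraph) : Set X.A :=
  {a | a ∈ Set.range X.s ∧ X.i a ∈ Set.range X.s}

/-- The set of inner arcs of `X` cut by a cover `q : R → X`: those hit by an
arc of `R` which is a port (so the corresponding inner edge is hit twice). -/
def cutArcs {R X : JKGraph} (q : Etale R X) : Set X.A :=
  {a | a ∈ innerArcs X ∧ ∃ b : R.A, q.fA b = a ∧ b ∉ Set.range R.s}

/-!
A reduced cover `q : R → X` is bijective on half-edges and vertices, so `R` is `X` with some of
its inner edges cut in two, each half ending in a new port. The cut set determines the involution
of `R` on the arcs `s h`: two of them are paired exactly when their images are paired in `X` by an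
edge that is not cut (`Etale.i_s_eq_s_iff`). A map of covers over `X` preserves these pairings,
so it can only glue edges back, never cut them; conversely, when the cut sets are nested, the
bijection on half-edges extends to arcs by sending each port to the partner of the image of its
partner. Every invariant set of inner arcs is realised by cutting exactly those edges of `X`.
-/

open Function Set

theorem JKGraph.i_injective (G : JKGraph) : Injective G.i :=
  Involutive.injective G.i_invol

theorem NoIsolated.i_mem_range {G : JKGraph} (hG : NoIsolated G) {b : G.A}
    (hb : b ∉ range G.s) : G.i b ∈ range G.s :=
  (hG b).resolve_left hb

namespace Etale

variable {R R' X : JKGraph}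

theorem fH_injective (q : Etale R X) (hV : Injective q.fV) : Injective q.fH := by
  intro h₁ h₂ hh
  have hp : R.p h₁ = R.p h₂ := hV (by rw [q.comm_p, q.comm_p, hh])
  exact (q.pullback (q.fH h₁) (R.p h₁) (q.comm_p h₁).symm).unique ⟨rfl, rfl⟩
    ⟨hp.symm, hh.symm⟩

theorem fH_surjective (q : Etale R X) (hV : Surjective q.fV) : Surjective q.fH := by
  intro h'
  obtain ⟨v, hv⟩ := hV (X.p h')
  obtain ⟨h, ⟨-, hh⟩, -⟩ := q.pullback h' v hv.symm
  exact ⟨h, hh⟩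

theorem fH_bijective (q : Etale R X) (hV : Bijective q.fV) : Bijective q.fH :=
  ⟨q.fH_injective hV.1, q.fH_surjective hV.2⟩

theorem pullback_of_bijective {fH : R.H → R'.H} {fV : R.V → R'.V}
    (comm_p : ∀ h, fV (R.p h) = R'.p (fH h)) (hH : Bijective fH) (hV : Injective fV)
    (h' : R'.H) (v : R.V) (hv : R'.p h' = fV v) : ∃! h : R.H, R.p h = v ∧ fH h = h' := by
  obtain ⟨h, rfl⟩ := hH.2 h'
  exact ⟨h, ⟨hV (by rw [comm_p, hv]), rfl⟩, fun k hk => hH.1 hk.2⟩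

theorem exists_fA_s_eq (q : Etale R X) (hV : Surjective q.fV) {a : X.A} (ha : a ∈ range X.s) :
    ∃ h, q.fA (R.s h) = a := by
  obtain ⟨x, rfl⟩ := ha
  obtain ⟨h, rfl⟩ := q.fH_surjective hV x
  exact ⟨h, q.comm_s h⟩

theorem eq_of_fA_s_eq (q : Etale R X) (hV : Injective q.fV) {h₁ h₂ : R.H}
    (h : q.fA (R.s h₁) = q.fA (R.s h₂)) : h₁ = h₂ := by
  rw [q.comm_s, q.comm_s] at h
  exact q.fH_injective hV (X.s_inj h)

theorem mem_cutArcs_of_i_s_notMem_range (q : Etale R X) (hV : Bijective q.fV) {h : R.H}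
    (hin : q.fA (R.s h) ∈ innerArcs X) (hport : R.i (R.s h) ∉ range R.s) :
    q.fA (R.s h) ∈ cutArcs q := by
  obtain ⟨k, hk⟩ := q.exists_fA_s_eq hV.2 hin.2
  have hik : q.fA (R.i (R.s k)) = q.fA (R.s h) := by rw [q.comm_i, hk, X.i_invol]
  refine ⟨hin, R.i (R.s k), hik, ?_⟩
  rintro ⟨m, hm⟩
  obtain rfl : m = h := q.eq_of_fA_s_eq hV.1 (hm ▸ hik)
  exact hport ⟨k, by rw [hm, R.i_invol]⟩

theorem i_s_notMem_range_of_mem_cutArcs (q : Etale R X) (hR : NoIsolated R)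
    (hV : Injective q.fV) {h : R.H} (hcut : q.fA (R.s h) ∈ cutArcs q) :
    R.i (R.s h) ∉ range R.s := by
  obtain ⟨-, b, hb, hport⟩ := hcut
  obtain ⟨k, hk⟩ := hR.i_mem_range hport
  rintro ⟨k', hk'⟩
  obtain rfl : k' = k := q.eq_of_fA_s_eq hV (by rw [hk', hk, q.comm_i, q.comm_i, hb])
  exact hport ⟨h, R.i_injective (hk'.symm.trans hk)⟩

theorem i_s_eq_s_iff (q : Etale R X) (hR : NoIsolated R) (hV : Bijective q.fV) (h k : R.H) :
    R.i (R.s h) = R.s k ↔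
      X.i (X.s (q.fH h)) = X.s (q.fH k) ∧ X.s (q.fH h) ∉ cutArcs q := by
  simp only [← q.comm_s]
  constructor
  · intro hhk
    refine ⟨by rw [← q.comm_i, hhk], fun hcut => ?_⟩
    exact q.i_s_notMem_range_of_mem_cutArcs hR hV.1 hcut ⟨k, hhk.symm⟩
  · rintro ⟨hik, hnc⟩
    have hin : q.fA (R.s h) ∈ innerArcs X :=
      ⟨⟨q.fH h, (q.comm_s h).symm⟩, ⟨q.fH k, by rw [hik, q.comm_s]⟩⟩
    obtain ⟨k', hk'⟩ : R.i (R.s h) ∈ range R.s := by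
      by_contra hport
      exact hnc (q.mem_cutArcs_of_i_s_notMem_range hV hin hport)
    obtain rfl : k' = k := q.eq_of_fA_s_eq hV.1 (by rw [hk', q.comm_i, hik])
    exact hk'.symm

section

variable {q : Etale R X} {q' : Etale R' X}

theorem cutArcs_subset_of_isEComp (hR : NoIsolated R) (hR' : NoIsolated R')
    (hV : Bijective q.fV) (hV' : Bijective q'.fV) {m : Etale R R'} (hm : IsEComp m q' q) :
    cutArcs q' ⊆ cutArcs q := by
  intro a ha
  obtain ⟨h, rfl⟩ := q.exists_fA_s_eq hV.2 ha.1.1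
  obtain ⟨k, hk⟩ := q.exists_fA_s_eq hV.2 ha.1.2
  simp only [q.comm_s] at ha hk ⊢
  by_contra hnc
  have hhk := (q.i_s_eq_s_iff hR hV h k).2 ⟨hk.symm, hnc⟩
  have hmhk : R'.i (R'.s (m.fH h)) = R'.s (m.fH k) := by
    rw [← m.comm_s, ← m.comm_i, hhk, m.comm_s]
  exact ((q'.i_s_eq_s_iff hR' hV' _ _).1 hmhk).2 (hm.2.1 h ▸ ha)

theorem cutArcs_subset_of_isEComp_of_injective {m : Etale R R'} (hm : IsEComp m q' q)
    (hA : Injective m.fA) (hH : Surjective m.fH) : cutArcs q ⊆ cutArcs q' := by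
  rintro a ⟨ha, b, rfl, hb⟩
  refine ⟨ha, m.fA b, (hm.1 b).symm, ?_⟩
  rintro ⟨h', hh'⟩
  obtain ⟨h, rfl⟩ := hH h'
  exact hb ⟨h, hA (by rw [m.comm_s, hh'])⟩

theorem leftInverse_of_isEComp (hR : NoIsolated R) (hV : Injective q.fV) {m : Etale R R'}
    {m' : Etale R' R} (hm : IsEComp m q' q) (hm' : IsEComp m' q q') :
    LeftInverse m'.fA m.fA ∧ LeftInverse m'.fH m.fH ∧ LeftInverse m'.fV m.fV := by
  have hH : LeftInverse m'.fH m.fH := fun h =>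
    q.fH_injective hV (by rw [← hm'.2.1, ← hm.2.1])
  refine ⟨fun a => ?_, hH, fun v => hV (by rw [← hm'.2.2, ← hm.2.2])⟩
  rcases hR a with ⟨h, rfl⟩ | ⟨h, hh⟩
  · rw [m.comm_s, m'.comm_s, hH]
  · apply R.i_injective
    rw [← m'.comm_i, ← m.comm_i, ← hh, m.comm_s, m'.comm_s, hH]

end

end Etale

noncomputable def arcMap {R R' : JKGraph} (hR : NoIsolated R) (f : R.H → R'.H) (b : R.A) :
    R'.A :=
  if hb : b ∈ range R.s then R'.s (f hb.choose) else R'.i (R'.s (f (hR.i_mem_range hb).choose))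

section arcMap

variable {R R' : JKGraph} (hR : NoIsolated R) (f : R.H → R'.H)

theorem arcMap_s (h : R.H) : arcMap hR f (R.s h) = R'.s (f h) := by
  have hb : R.s h ∈ range R.s := ⟨h, rfl⟩
  rw [arcMap, dif_pos hb, R.s_inj hb.choose_spec]

theorem arcMap_of_notMem_range {b : R.A} (hb : b ∉ range R.s) {k : R.H} (hk : R.s k = R.i b) :
    arcMap hR f b = R'.i (R'.s (f k)) := by
  rw [arcMap, dif_neg hb, R.s_inj ((hR.i_mem_range hb).choose_spec.trans hk.symm)]

theorem arcMap_i (hf : ∀ h k, R.i (R.s h) = R.s k → R'.i (R'.s (f h)) = R'.s (f k)) (a : R.A) :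
    arcMap hR f (R.i a) = R'.i (arcMap hR f a) := by
  by_cases ha : a ∈ range R.s
  · obtain ⟨h, rfl⟩ := ha
    rw [arcMap_s]
    by_cases hi : R.i (R.s h) ∈ range R.s
    · obtain ⟨k, hk⟩ := hi
      rw [← hk, arcMap_s, hf h k hk.symm]
    · exact arcMap_of_notMem_range hR f hi (R.i_invol _).symm
  · obtain ⟨k, hk⟩ := hR.i_mem_range ha
    rw [← hk, arcMap_s, arcMap_of_notMem_range hR f ha hk, R'.i_invol]

theorem fA_arcMap {X : JKGraph} (q : Etale R X) (q' : Etale R' X)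
    (hf : ∀ h, q'.fH (f h) = q.fH h) (a : R.A) : q'.fA (arcMap hR f a) = q.fA a := by
  by_cases ha : a ∈ range R.s
  · obtain ⟨h, rfl⟩ := ha
    rw [arcMap_s, q'.comm_s, hf, q.comm_s]
  · obtain ⟨k, hk⟩ := hR.i_mem_range ha
    rw [arcMap_of_notMem_range hR f ha hk, q'.comm_i, q'.comm_s, hf, ← q.comm_s, hk, q.comm_i,
      X.i_invol]

end arcMap

namespace Etale

variable {R R' X : JKGraph} {q : Etale R X} {q' : Etale R' X}

theorem exists_isEComp_of_cutArcs_subset (hR : NoIsolated R) (hR' : NoIsolated R')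
    (hV : Bijective q.fV) (hV' : Bijective q'.fV) (hsub : cutArcs q' ⊆ cutArcs q) :
    ∃ m : Etale R R', IsEComp m q' q := by
  let eH := Equiv.ofBijective q'.fH (q'.fH_bijective hV')
  let eV := Equiv.ofBijective q'.fV hV'
  let fH : R.H → R'.H := fun h => eH.symm (q.fH h)
  let fV : R.V → R'.V := fun v => eV.symm (q.fV v)
  have hfH (h : R.H) : q'.fH (fH h) = q.fH h := eH.apply_symm_apply _
  have hfV (v : R.V) : q'.fV (fV v) = q.fV v := eV.apply_symm_apply _
  have comm_p (h : R.H) : fV (R.p h) = R'.p (fH h) :=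
    hV'.1 (by rw [hfV, q.comm_p, q'.comm_p, hfH])
  have hpair (h k : R.H) (hhk : R.i (R.s h) = R.s k) : R'.i (R'.s (fH h)) = R'.s (fH k) := by
    obtain ⟨hik, hnc⟩ := (q.i_s_eq_s_iff hR hV h k).1 hhk
    rw [← hfH, ← hfH] at hik
    rw [← hfH] at hnc
    exact (q'.i_s_eq_s_iff hR' hV' _ _).2 ⟨hik, fun hcut => hnc (hsub hcut)⟩
  refine ⟨⟨arcMap hR fH, fH, fV, arcMap_s hR fH, comm_p, arcMap_i hR fH hpair,
    pullback_of_bijective comm_p ?_ ?_⟩, fun a => (fA_arcMap hR fH q q' hfH a).symm,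
    fun h => (hfH h).symm, fun v => (hfV v).symm⟩
  · exact eH.symm.bijective.comp (q.fH_bijective hV)
  · exact eV.symm.injective.comp hV.1

theorem exists_isEComp_iff_cutArcs_subset (hR : NoIsolated R) (hR' : NoIsolated R')
    (hV : Bijective q.fV) (hV' : Bijective q'.fV) :
    (∃ m : Etale R R', IsEComp m q' q) ↔ cutArcs q' ⊆ cutArcs q :=
  ⟨fun ⟨_, hm⟩ => cutArcs_subset_of_isEComp hR hR' hV hV' hm,
    exists_isEComp_of_cutArcs_subset hR hR' hV hV'⟩

theorem exists_iso_iff_cutArcs_eq (hR : NoIsolated R) (hR' : NoIsolated R')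
    (hV : Bijective q.fV) (hV' : Bijective q'.fV) :
    (∃ e : Etale R R',
        Bijective e.fA ∧ Bijective e.fH ∧ Bijective e.fV ∧ IsEComp e q' q) ↔
      cutArcs q = cutArcs q' := by
  constructor
  · rintro ⟨e, hA, hH, -, he⟩
    exact (cutArcs_subset_of_isEComp_of_injective he hA.1 hH.2).antisymm
      (cutArcs_subset_of_isEComp hR hR' hV hV' he)
  · intro hcut
    obtain ⟨m, hm⟩ := (exists_isEComp_iff_cutArcs_subset hR hR' hV hV').2 hcut.ge
    obtain ⟨m', hm'⟩ := (exists_isEComp_iff_cutArcs_subset hR' hR hV' hV).2 hcut.le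
    obtain ⟨invA, invH, invV⟩ := leftInverse_of_isEComp hR hV.1 hm hm'
    obtain ⟨invA', invH', invV'⟩ := leftInverse_of_isEComp hR' hV'.1 hm' hm
    exact ⟨m, bijective_iff_has_inverse.2 ⟨_, invA, invA'⟩,
      bijective_iff_has_inverse.2 ⟨_, invH, invH'⟩,
      bijective_iff_has_inverse.2 ⟨_, invV, invV'⟩, hm⟩

end Etale

section cutGraph

variable (X : JKGraph) (S : Set X.A) (hS : ∀ a ∈ S, X.i a ∈ S)

open Classical in
/-- `X` with the edges through `S` cut: each `a ∈ S` is re-paired with a new port `inr a`, which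
`cutCover` sends to `X.i a`. -/
noncomputable def cutGraph : JKGraph where
  A := X.A ⊕ S
  H := X.H
  V := X.V
  fintA := inferInstance
  fintH := X.fintH
  fintV := X.fintV
  decA := inferInstance
  decH := X.decH
  s h := .inl (X.s h)
  p := X.p
  i := Sum.elim (fun a => if h : a ∈ S then .inr ⟨a, h⟩ else .inl (X.i a)) fun b => .inl b.1
  s_inj _ _ h := X.s_inj (Sum.inl.inj h)
  i_invol a := by
    rcases a with a | ⟨a, ha⟩
    · by_cases h : a ∈ S
      · simp [h]
      · have h' : X.i a ∉ S := fun h' => h (X.i_invol a ▸ hS _ h')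
        simp [h, h', X.i_invol]
    · simp [ha]
  i_nofix a := by
    rcases a with a | ⟨a, ha⟩
    · by_cases h : a ∈ S <;> simp [h, X.i_nofix a]
    · simp

variable {X S}

open Classical in
theorem cutGraph_i_inl_of_mem {a : X.A} (h : a ∈ S) :
    (cutGraph X S hS).i (.inl a) = .inr ⟨a, h⟩ :=
  dif_pos h

open Classical in
theorem cutGraph_i_inl_of_notMem {a : X.A} (h : a ∉ S) :
    (cutGraph X S hS).i (.inl a) = .inl (X.i a) :=
  dif_neg h

theorem inl_mem_range_cutGraph_s_iff (a : X.A) :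
    .inl a ∈ range (cutGraph X S hS).s ↔ a ∈ range X.s :=
  exists_congr fun _ => Sum.inl_injective.eq_iff

theorem inr_notMem_range_cutGraph_s (b : S) : .inr b ∉ range (cutGraph X S hS).s :=
  fun ⟨_, h⟩ => Sum.inl_ne_inr h

variable (X S)

noncomputable def cutCover : Etale (cutGraph X S hS) X where
  fA := Sum.elim id fun b => X.i b.1
  fH := id
  fV := id
  comm_s _ := rfl
  comm_p _ := rfl
  comm_i a := by
    rcases a with a | ⟨a, ha⟩
    · by_cases h : a ∈ S
      · rw [cutGraph_i_inl_of_mem hS h]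
        rfl
      · rw [cutGraph_i_inl_of_notMem hS h]
        rfl
    · exact (X.i_invol a).symm
  pullback h' _ hv := ⟨h', ⟨hv, rfl⟩, fun _ hh => hh.2⟩

theorem isReducedCover_cutCover : IsReducedCover (cutCover X S hS) :=
  ⟨bijective_id, fun a => ⟨.inl a, rfl⟩⟩

variable {X S}

theorem noIsolated_cutGraph (hX : NoIsolated X) (hSin : S ⊆ innerArcs X) :
    NoIsolated (cutGraph X S hS) := by
  rintro (a | ⟨a, ha⟩)
  · by_cases h : a ∈ range X.s
    · exact .inl ((inl_mem_range_cutGraph_s_iff hS a).2 h)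
    · have haS : a ∉ S := fun ha => h (hSin ha).1
      rw [cutGraph_i_inl_of_notMem hS haS]
      exact .inr ((inl_mem_range_cutGraph_s_iff hS _).2 (hX.i_mem_range h))
  · exact .inr ((inl_mem_range_cutGraph_s_iff hS a).2 (hSin ha).1)

theorem cutArcs_cutCover (hSin : S ⊆ innerArcs X) : cutArcs (cutCover X S hS) = S := by
  ext a
  constructor
  · rintro ⟨ha, (b | ⟨b, hb⟩), hba, hport⟩
    · subst hba
      exact absurd ((inl_mem_range_cutGraph_s_iff hS b).2 ha.1) hport
    · exact hba ▸ hS b hb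
  · intro ha
    exact ⟨hSin ha, .inr ⟨X.i a, hS a ha⟩, X.i_invol a, inr_notMem_range_cutGraph_s hS _⟩

end cutGraph

/-- For a JK graph `X` without isolated edges, the reduced
covers of `X`, up to isomorphism over `X`, are in order-preserving bijection
with the (involution-invariant) subsets of inner arcs of `X`, i.e. with the
subsets of the set of inner edges of `X`; in particular they form a Boolean
lattice.  The bijection sends a reduced cover to the set of inner edges it
cuts; order-preservation says a factorisation over `X` exists precisely when
the cut sets are nested. -/
theorem reduced_covers_boolean_lattice (X : JKGraph) (hX : NoIsolated X) :
    (∀ (R R' : JKGraph) (q : Etale R X) (q' : Etale R' X),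
      NoIsolated R → NoIsolated R' → IsReducedCover q → IsReducedCover q' →
      ((∃ e : Etale R R', Function.Bijective e.fA ∧ Function.Bijective e.fH ∧
          Function.Bijective e.fV ∧ IsEComp e q' q) ↔ cutArcs q = cutArcs q')) ∧
    (∀ S : Set X.A, S ⊆ innerArcs X → (∀ a ∈ S, X.i a ∈ S) →
      ∃ (R : JKGraph) (q : Etale R X), NoIsolated R ∧ IsReducedCover q ∧
        cutArcs q = S) ∧
    (∀ (R R' : JKGraph) (q : Etale R X) (q' : Etale R' X),
      NoIsolated R → NoIsolated R' → IsReducedCover q → IsReducedCover q' →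
      ((∃ m : Etale R R', IsEComp m q' q) ↔ cutArcs q' ⊆ cutArcs q)) :=
  ⟨fun _ _ _ _ hR hR' hq hq' => Etale.exists_iso_iff_cutArcs_eq hR hR' hq.1 hq'.1,
    fun S hSin hS => ⟨cutGraph X S hS, cutCover X S hS, noIsolated_cutGraph hS hX hSin,
      isReducedCover_cutCover X S hS, cutArcs_cutCover hS hSin⟩,
    fun _ _ _ _ hR hR' hq hq' => Etale.exists_isEComp_iff_cutArcs_subset hR hR' hq.1 hq'.1⟩
end

section
/- Every reduced cover morphism R → R' of Joyal–Kock graphs is an epimorphism in the Kleisli category of the free compact-coloured-prop monad: any two Kleisli morphisms R' → Y that agree after precomposition with R → R' are equal. This follows because the induced functor el(R) → el(R') on categories of elements is surjective on objects. -/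
/-- An effective open subgraph of a JK graph `S`: a set of vertices and a set
of arcs, closed under the involution, containing the arcs of all flags of its
vertices, nonempty and with no isolated edges (effective). -/
structure OpenSub (S : JKGraph) where
  arcs : Set S.A
  verts : Set S.V
  i_closed : ∀ a ∈ arcs, S.i a ∈ arcs
  s_mem : ∀ h : S.H, S.p h ∈ verts → S.s h ∈ arcs
  verts_nonempty : verts.Nonempty
  no_isolated : ∀ a ∈ arcs, ∃ h : S.H, S.p h ∈ verts ∧ (S.s h = a ∨ S.s h = S.i a)

/-- A port of an open subgraph: an arc of the subgraph which is not the
emanating arc of any flag of the subgraph. -/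
def OpenSub.IsPort {S : JKGraph} (O : OpenSub S) (a : S.A) : Prop :=
  a ∈ O.arcs ∧ ¬ ∃ h : S.H, S.p h ∈ O.verts ∧ S.s h = a

/-- A Kleisli morphism `R → Y` for the free compact-coloured-prop monad, in
its diagrammatic description: arcs map to arcs (edges to edges), each vertex
maps to an effective open subgraph of `Y`, and each flag maps to the
corresponding port of the subgraph at its vertex, compatibly with the
structure maps; the flags of each vertex correspond bijectively to the ports
of its subgraph (matching interfaces). -/
structure KleisliHom (R Y : JKGraph) where
  fA : R.A → Y.A
  fH : R.H → Y.A
  fV : R.V → OpenSub Y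
  comm_i : ∀ a, fA (R.i a) = Y.i (fA a)
  comm_s : ∀ h, fA (R.s h) = Y.i (fH h)
  mem_port : ∀ h : R.H, (fV (R.p h)).IsPort (fH h)
  pullback : ∀ (v : R.V) (a : Y.A), (fV v).IsPort a → ∃! h : R.H, R.p h = v ∧ fH h = a

/-- A generic (refinement) Kleisli morphism: injective on arcs, every vertex
of the codomain lies in exactly one of the refining subgraphs, and the
morphism is bijective on ports (so the glued-up refinement is all of `Y`). -/
def IsGeneric {R Y : JKGraph} (k : KleisliHom R Y) : Prop :=
  Function.Injective k.fA ∧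
  (∀ w : Y.V, ∃! v : R.V, w ∈ (k.fV v).verts) ∧
  (∀ a ∈ R.ports, k.fA a ∈ Y.ports) ∧
  (∀ b ∈ Y.ports, ∃! a : R.A, a ∈ R.ports ∧ k.fA a = b)

/-- `IsKComp k l m` expresses that `m : R → Y` is the Kleisli composite of
`k : R → S` followed by `l : S → Y`: arcs compose, the flag/port data
composes, and the subgraph refining a vertex `v` is the union of the
subgraphs refining the vertices of the subgraph `k.fV v`, glued along the
images of its arcs. -/
def IsKComp {R S Y : JKGraph} (k : KleisliHom R S) (l : KleisliHom S Y)
    (m : KleisliHom R Y) : Prop :=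
  (∀ a, m.fA a = l.fA (k.fA a)) ∧
  (∀ h, m.fH h = l.fA (k.fH h)) ∧
  (∀ v, (m.fV v).verts = ⋃ w ∈ (k.fV v).verts, (l.fV w).verts) ∧
  (∀ v, (m.fV v).arcs = l.fA '' (k.fV v).arcs ∪ ⋃ w ∈ (k.fV v).verts, (l.fV w).arcs)

/-- `IsEtaleKleisli e k` expresses that the Kleisli morphism `k` is the free
morphism on the etale morphism `e` (each vertex is sent to the one-vertex
subgraph at its image). -/
def IsEtaleKleisli {R S : JKGraph} (e : Etale R S) (k : KleisliHom R S) : Prop :=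
  (∀ a, k.fA a = e.fA a) ∧
  (∀ h, k.fH h = S.i (S.s (e.fH h))) ∧
  (∀ v, (k.fV v).verts = {e.fV v})

/-- The identity Kleisli morphism (free on the identity etale morphism). -/
def IsIdKleisli {S : JKGraph} (k : KleisliHom S S) : Prop :=
  (∀ a, k.fA a = a) ∧ (∀ h, k.fH h = S.i (S.s h)) ∧ (∀ v, (k.fV v).verts = {v})

/-- The identity etale morphism. -/
def IsIdEtale {S : JKGraph} (e : Etale S S) : Prop :=
  (∀ a, e.fA a = a) ∧ (∀ h, e.fH h = h) ∧ (∀ v, e.fV v = v)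

/-!
A Kleisli morphism out of `R'` is determined by its values on the elements of `R'` (arcs, flags and
vertices), and a reduced cover is surjective on all three: on vertices and arcs by definition, on
flags because the etale pullback square lifts every flag of `R'` to the preimage of its vertex.
Precomposition with a surjection is injective, so agreement after precomposition forces equality.
-/

attribute [ext] KleisliHom

/-- Surjectivity of `el(R) → el(R')` on objects. -/
def Etale.SurjectiveOnElements {R R' : JKGraph} (e : Etale R R') : Prop :=
  Function.Surjective e.fA ∧ Function.Surjective e.fH ∧ Function.Surjective e.fV

theorem Etale.surjective_fH_of_surjective_fV {R R' : JKGraph} (e : Etale R R')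
    (hV : Function.Surjective e.fV) : Function.Surjective e.fH := by
  intro h'
  obtain ⟨v, hv⟩ := hV (R'.p h')
  obtain ⟨h, ⟨-, hh⟩, -⟩ := e.pullback h' v hv.symm
  exact ⟨h, hh⟩

theorem IsReducedCover.surjectiveOnElements {R R' : JKGraph} {e : Etale R R'}
    (he : IsReducedCover e) : e.SurjectiveOnElements :=
  ⟨he.2, e.surjective_fH_of_surjective_fV he.1.2, he.1.2⟩

theorem KleisliHom.ext_of_surjectiveOnElements {R R' Y : JKGraph} {e : Etale R R'}
    (he : e.SurjectiveOnElements) {k k' : KleisliHom R' Y}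
    (hA : k.fA ∘ e.fA = k'.fA ∘ e.fA) (hH : k.fH ∘ e.fH = k'.fH ∘ e.fH)
    (hV : k.fV ∘ e.fV = k'.fV ∘ e.fV) : k = k' := by
  obtain ⟨surjA, surjH, surjV⟩ := he
  ext1
  · exact surjA.injective_comp_right hA
  · exact surjH.injective_comp_right hH
  · exact surjV.injective_comp_right hV

/-- Every reduced cover `e : R → R'` is an epimorphism in
the (restricted) Kleisli category of the free compact-coloured-prop monad:
two Kleisli morphisms `R' → Y` that agree after precomposition with `e`
(levelwise, on arcs, flags and the refining subgraphs) are equal.  (This holds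
because the induced functor `el(R) → el(R')` is surjective on objects.) -/
theorem reduced_cover_epi_in_Kleisli {R R' Y : JKGraph} (e : Etale R R')
    (he : IsReducedCover e) (k k' : KleisliHom R' Y)
    (hA : ∀ a, k.fA (e.fA a) = k'.fA (e.fA a))
    (hH : ∀ h, k.fH (e.fH h) = k'.fH (e.fH h))
    (hV : ∀ v, k.fV (e.fV v) = k'.fV (e.fV v)) :
    k = k' :=
  KleisliHom.ext_of_surjectiveOnElements he.surjectiveOnElements (funext hA) (funext hH) (funext hV)
end
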